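/- For every positive integer d and all finite trees T_1, …, T_d each having at least two vertices, c_{2,2}(T_1 □ ⋯ □ T_d) ≥ ⌊d/2⌋. -/

import Mathlib

open SimpleGraph

variable {V : Type*}

/-- A cop of speed `s` may move from `u` to `v` by traversing at most `s` edges. -/
def copStep (G : SimpleGraph V) (s : ℕ) (u v : V) : Prop :=
  ∃ p : G.Walk u v, p.length ≤ s

/-- A robber of speed `s` may move from `u` to `v` by traversing at most `s` edges,
never passing through a vertex of `S` (the set of vertices occupied by cops). -/
def robberStep (G : SimpleGraph V) (s : ℕ) (S : Set V) (u v : V) : Prop :=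
  ∃ p : G.Walk u v, p.length ≤ s ∧ ∀ x ∈ p.support.tail, x ∉ S

/-- `CanCatch G sc sr n cops r` : cops (of speed `sc`) at positions `cops`, robber
(of speed `sr`) at `r`, cops about to move; the cops can force a capture within
`n` further rounds. -/
def CanCatch (G : SimpleGraph V) (sc sr : ℕ) {k : ℕ} : ℕ → (Fin k → V) → V → Prop
  | 0, cops, r => ∃ i, cops i = r
  | n + 1, cops, r => (∃ i, cops i = r) ∨
      ∃ cops' : Fin k → V, (∀ i, copStep G sc (cops i) (cops' i)) ∧
        ((∃ i, cops' i = r) ∨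
          ∀ r', robberStep G sr {x | ∃ i, cops' i = x} r r' →
            CanCatch G sc sr n cops' r')

/-- The speed-`(sc, sr)` cop number of `G`: the least number `k` of cops which have
a winning strategy when the cops move with speed `sc` and the robber with speed `sr`.
The ordinary cop number is `copNumber G 1 1`. -/
noncomputable def copNumber (G : SimpleGraph V) (sc sr : ℕ) : ℕ :=
  sInf {k : ℕ | ∃ cops : Fin k → V, ∀ r : V, ∃ n : ℕ, CanCatch G sc sr n cops r}

/-- The `s`-th power of `G` : distinct vertices are adjacent iff their distance
in `G` is at most `s`. -/
def graphPow (G : SimpleGraph V) (s : ℕ) : SimpleGraph V where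
  Adj u v := u ≠ v ∧ ∃ p : G.Walk u v, p.length ≤ s
  symm := by
    constructor
    rintro u v ⟨h, p, hp⟩
    exact ⟨h.symm, p.reverse, by simpa using hp⟩
  loopless := by constructor; rintro u ⟨h, -⟩; exact h rfl

/-- The Cartesian (box) product of the family of graphs `T i`, `i : Fin d`. -/
def boxPi {d : ℕ} {V : Fin d → Type*} (T : ∀ i, SimpleGraph (V i)) :
    SimpleGraph (∀ i, V i) where
  Adj x y := ∃ i, (T i).Adj (x i) (y i) ∧ ∀ j, j ≠ i → x j = y j
  symm := by
    constructor
    rintro x y ⟨i, h, h'⟩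
    exact ⟨i, h.symm, fun j hj => (h' j hj).symm⟩
  loopless := by constructor; rintro x ⟨i, h, -⟩; exact (T i).loopless.irrefl _ h

section S15Aux
open Finset
namespace S15


variable {d : ℕ}

def Dset (p q : Fin d → Bool) : Finset (Fin d) := univ.filter fun j => p j ≠ q j

def hdist (p q : Fin d → Bool) : ℕ := (Dset p q).card

def flip1 (j : Fin d) (p : Fin d → Bool) : Fin d → Bool := Function.update p j (!(p j))

lemma mem_Dset {p q : Fin d → Bool} {j} : j ∈ Dset p q ↔ p j ≠ q j := by
  simp [Dset]

lemma hdist_self (p : Fin d → Bool) : hdist p p = 0 := by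
  simp [hdist, Dset]

lemma hdist_pos {p q : Fin d → Bool} (h : p ≠ q) : 1 ≤ hdist p q := by
  rcases Function.ne_iff.mp h with ⟨j, hj⟩
  exact Finset.card_pos.mpr ⟨j, mem_Dset.mpr hj⟩

lemma hdist_comm (p q : Fin d → Bool) : hdist p q = hdist q p := by
  unfold hdist Dset
  congr 1
  ext j
  simp [ne_comm]

lemma hdist_triangle (p q r : Fin d → Bool) : hdist p r ≤ hdist p q + hdist q r := by
  have hsub : Dset p r ⊆ Dset p q ∪ Dset q r := by
    intro j hj
    rw [mem_Dset] at hj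
    rcases eq_or_ne (p j) (q j) with h | h
    · exact Finset.mem_union_right _ (mem_Dset.mpr (h ▸ hj))
    · exact Finset.mem_union_left _ (mem_Dset.mpr h)
  calc (Dset p r).card ≤ (Dset p q ∪ Dset q r).card := Finset.card_le_card hsub
    _ ≤ _ := Finset.card_union_le _ _

lemma flip1_apply_self (j : Fin d) (p : Fin d → Bool) : flip1 j p j = !(p j) :=
  Function.update_self ..

lemma flip1_apply_ne {j j' : Fin d} (h : j' ≠ j) (p : Fin d → Bool) : flip1 j p j' = p j' :=
  Function.update_of_ne h ..

lemma Dset_flip_mem {p q : Fin d → Bool} {j} (h : j ∈ Dset p q) :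
    Dset (flip1 j p) q = (Dset p q).erase j := by
  rw [mem_Dset] at h
  ext x
  rcases eq_or_ne x j with rfl | hx
  · simp only [mem_Dset, flip1_apply_self, Finset.mem_erase, ne_eq, not_true_eq_false,
      false_and, iff_false]
    revert h
    cases p x <;> cases q x <;> simp
  · simp [mem_Dset, flip1_apply_ne hx, Finset.mem_erase, hx]

lemma Dset_flip_not_mem {p q : Fin d → Bool} {j} (h : j ∉ Dset p q) :
    Dset (flip1 j p) q = insert j (Dset p q) := by
  rw [mem_Dset, not_not] at h
  ext x
  rcases eq_or_ne x j with rfl | hx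
  · simp only [mem_Dset, flip1_apply_self, Finset.mem_insert, true_or, iff_true]
    rw [← h]
    cases p x <;> simp
  · simp [mem_Dset, flip1_apply_ne hx, hx]

lemma hdist_flip_mem {p q : Fin d → Bool} {j} (h : j ∈ Dset p q) :
    hdist (flip1 j p) q + 1 = hdist p q := by
  rw [hdist, hdist, Dset_flip_mem h, Finset.card_erase_of_mem h]
  have : 0 < (Dset p q).card := Finset.card_pos.mpr ⟨j, h⟩
  omega

lemma hdist_flip_not_mem {p q : Fin d → Bool} {j} (h : j ∉ Dset p q) :
    hdist (flip1 j p) q = hdist p q + 1 := by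
  rw [hdist, hdist, Dset_flip_not_mem h, Finset.card_insert_of_notMem h]

lemma hdist_flip_ge (p q : Fin d → Bool) (j : Fin d) :
    hdist p q ≤ hdist (flip1 j p) q + 1 := by
  by_cases h : j ∈ Dset p q
  · exact (hdist_flip_mem h).ge
  · rw [hdist_flip_not_mem h]; omega

lemma mem_Dset_flip {p q : Fin d → Bool} {j l} (h : l ≠ j) :
    l ∈ Dset (flip1 j p) q ↔ l ∈ Dset p q := by
  simp [mem_Dset, flip1_apply_ne h]


lemma hdist_def (p q : Fin d → Bool) : hdist p q = (Dset p q).card := rfl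

lemma move {k : ℕ} (hdk : 2 * k + 2 ≤ d) (p : Fin d → Bool) (q : Fin k → Fin d → Bool)
    (hq : ∀ i, p ≠ q i) :
    ∃ p', (∀ i, 3 ≤ hdist p' (q i)) ∧
      ((∃ j, p' = flip1 j p) ∨
       ∃ j l, l ≠ j ∧ p' = flip1 l (flip1 j p) ∧ ∀ i, flip1 j p ≠ q i) := by
  classical
  have hδ1 : ∀ i, 1 ≤ (Dset p (q i)).card := fun i => hdist_pos (hq i)
  set A : Finset (Fin k) := univ.filter (fun i => (Dset p (q i)).card ≤ 2) with hA
  set B : Finset (Fin k) := univ.filter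
    (fun i => (Dset p (q i)).card = 3 ∨ (Dset p (q i)).card = 4) with hB
  set F : Finset (Fin d) := A.biUnion (fun i => Dset p (q i)) with hF
  set free : Finset (Fin d) := univ \ F with hfr
  have hDF : ∀ i ∈ A, Dset p (q i) ⊆ F := fun i hi =>
    Finset.subset_biUnion_of_mem (fun i => Dset p (q i)) hi
  have hclass : ∀ i, ((Dset p (q i)).card ≤ 2 ∧ i ∈ A) ∨
      (((Dset p (q i)).card = 3 ∨ (Dset p (q i)).card = 4) ∧ i ∈ B) ∨
      5 ≤ (Dset p (q i)).card := by
    intro i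
    rcases le_or_gt (Dset p (q i)).card 2 with h | h
    · exact Or.inl ⟨h, Finset.mem_filter.mpr ⟨Finset.mem_univ _, h⟩⟩
    rcases le_or_gt 5 (Dset p (q i)).card with h5 | h5
    · exact Or.inr (Or.inr h5)
    · have : (Dset p (q i)).card = 3 ∨ (Dset p (q i)).card = 4 := by omega
      exact Or.inr (Or.inl ⟨this, Finset.mem_filter.mpr ⟨Finset.mem_univ _, this⟩⟩)
  have hFcard : F.card ≤ 2 * A.card := by
    calc F.card ≤ ∑ i ∈ A, (Dset p (q i)).card := Finset.card_biUnion_le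
      _ ≤ ∑ _i ∈ A, 2 := Finset.sum_le_sum (fun i hi => (Finset.mem_filter.mp hi).2)
      _ = 2 * A.card := by rw [Finset.sum_const, smul_eq_mul, mul_comm]
  have hABle : A.card + B.card ≤ k := by
    have hdisj : Disjoint A B := by
      rw [Finset.disjoint_left]
      intro i hiA hiB
      have h1 := (Finset.mem_filter.mp hiA).2
      have h2 := (Finset.mem_filter.mp hiB).2
      omega
    calc A.card + B.card = (A ∪ B).card := (Finset.card_union_of_disjoint hdisj).symm
      _ ≤ (univ : Finset (Fin k)).card := Finset.card_le_card (Finset.subset_univ _)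
      _ = k := by simp
  have hfreeF : free.card = d - F.card := by
    rw [hfr, Finset.card_sdiff_of_subset (Finset.subset_univ _)]
    simp
  have hfreecard : 2 * B.card + 2 ≤ free.card := by omega
  -- averaging: find a free coordinate in few B-sets
  have havg : ∃ j ∈ free, (B.filter (fun i => j ∈ Dset p (q i))).card ≤ 1 := by
    by_contra hcon
    push_neg at hcon
    have hsum : 2 * free.card ≤ ∑ j ∈ free, (B.filter (fun i => j ∈ Dset p (q i))).card := by
      calc 2 * free.card = ∑ _j ∈ free, 2 := by rw [Finset.sum_const, smul_eq_mul, mul_comm]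
        _ ≤ _ := Finset.sum_le_sum (fun j hj => hcon j hj)
    have hswap : ∑ j ∈ free, (B.filter (fun i => j ∈ Dset p (q i))).card
        = ∑ i ∈ B, (free.filter (fun j => j ∈ Dset p (q i))).card := by
      simp only [Finset.card_filter]
      rw [Finset.sum_comm]
    have hsum2 : ∑ i ∈ B, (free.filter (fun j => j ∈ Dset p (q i))).card ≤ 4 * B.card := by
      calc _ ≤ ∑ _i ∈ B, 4 := Finset.sum_le_sum (fun i hi => by
            have h4 : (Dset p (q i)).card ≤ 4 := by
              rcases (Finset.mem_filter.mp hi).2 with h | h <;> omega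
            calc (free.filter (fun j => j ∈ Dset p (q i))).card ≤ (Dset p (q i)).card :=
                  Finset.card_le_card (fun j hj => (Finset.mem_filter.mp hj).2)
              _ ≤ 4 := h4)
        _ = 4 * B.card := by rw [Finset.sum_const, smul_eq_mul, mul_comm]
    omega
  obtain ⟨j, hjfree, htj⟩ := havg
  have hjF : j ∉ F := (Finset.mem_sdiff.mp hjfree).2
  have hjA : ∀ i ∈ A, j ∉ Dset p (q i) := fun i hi hj => hjF (hDF i hi hj)
  -- safety of the intermediate vertex (after one flip of a free coordinate)
  have hmid : ∀ (j' : Fin d), j' ∉ F → ∀ i, flip1 j' p ≠ q i := by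
    intro j' hj'F i heq
    have h1 : Dset p (q i) ⊆ {j'} := by
      intro x hx
      rw [mem_Dset] at hx
      rcases eq_or_ne x j' with rfl | hxj
      · exact Finset.mem_singleton_self _
      · exfalso
        have := congrFun heq x
        rw [flip1_apply_ne hxj] at this
        exact hx this
    have h2 : (Dset p (q i)).card ≤ 2 := le_trans (Finset.card_le_card h1) (by simp)
    have hiA : i ∈ A := Finset.mem_filter.mpr ⟨Finset.mem_univ _, h2⟩
    have hj'D : j' ∈ Dset p (q i) := by
      rw [mem_Dset]
      have := congrFun heq j'
      rw [flip1_apply_self] at this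
      cases hpj : p j' <;> rw [hpj] at this <;> simp [← this]
    exact hj'F (hDF i hiA hj'D)
  by_cases hl : ∃ l ∈ free, l ≠ j ∧ ∀ i ∈ B, ¬(j ∈ Dset p (q i) ∧ l ∈ Dset p (q i))
  · -- two flips: j then l
    obtain ⟨l, hlfree, hlj, hlB⟩ := hl
    refine ⟨flip1 l (flip1 j p), ?_, Or.inr ⟨j, l, hlj, rfl, hmid j hjF⟩⟩
    intro i
    have hlF : l ∉ F := (Finset.mem_sdiff.mp hlfree).2
    rcases hclass i with ⟨h2, hiA⟩ | ⟨h34, hiB⟩ | h5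
    · have hjD : j ∉ Dset p (q i) := hjA i hiA
      have hlD : l ∉ Dset p (q i) := fun h => hlF (hDF i hiA h)
      have e1 : hdist (flip1 j p) (q i) = hdist p (q i) + 1 := hdist_flip_not_mem hjD
      have e2 : hdist (flip1 l (flip1 j p)) (q i) = hdist (flip1 j p) (q i) + 1 :=
        hdist_flip_not_mem (fun h => hlD ((mem_Dset_flip hlj).mp h))
      have := hδ1 i
      have hdq : hdist p (q i) = (Dset p (q i)).card := rfl
      omega
    · have hnboth := hlB i hiB
      by_cases hjD : j ∈ Dset p (q i)
      · have hlD : l ∉ Dset p (q i) := fun h => hnboth ⟨hjD, h⟩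
        have e1 : hdist (flip1 j p) (q i) + 1 = hdist p (q i) := hdist_flip_mem hjD
        have e2 : hdist (flip1 l (flip1 j p)) (q i) = hdist (flip1 j p) (q i) + 1 :=
          hdist_flip_not_mem (fun h => hlD ((mem_Dset_flip hlj).mp h))
        have hdq : hdist p (q i) = (Dset p (q i)).card := rfl
        omega
      · have e1 : hdist (flip1 j p) (q i) = hdist p (q i) + 1 := hdist_flip_not_mem hjD
        by_cases hlD : l ∈ Dset p (q i)
        · have e2 : hdist (flip1 l (flip1 j p)) (q i) + 1 = hdist (flip1 j p) (q i) :=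
            hdist_flip_mem ((mem_Dset_flip hlj).mpr hlD)
          have hdq : hdist p (q i) = (Dset p (q i)).card := rfl
          omega
        · have e2 : hdist (flip1 l (flip1 j p)) (q i) = hdist (flip1 j p) (q i) + 1 :=
            hdist_flip_not_mem (fun h => hlD ((mem_Dset_flip hlj).mp h))
          have hdq : hdist p (q i) = (Dset p (q i)).card := rfl
          omega
    · have e1 := hdist_flip_ge p (q i) j
      have e2 := hdist_flip_ge (flip1 j p) (q i) l
      have hdq : hdist p (q i) = (Dset p (q i)).card := rfl
      omega
  · -- single flip case
    push_neg at hl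
    have hfree2 : 1 < free.card := by omega
    obtain ⟨l₀, hl₀free, hl₀j⟩ := Finset.exists_mem_ne hfree2 j
    obtain ⟨i₀, hi₀B, hji₀, _⟩ := hl l₀ hl₀free hl₀j
    have huniq : ∀ i ∈ B, j ∈ Dset p (q i) → i = i₀ := by
      intro i hiB hji
      exact Finset.card_le_one.mp htj _ (Finset.mem_filter.mpr ⟨hiB, hji⟩)
        _ (Finset.mem_filter.mpr ⟨hi₀B, hji₀⟩)
    have hfreesub : free ⊆ Dset p (q i₀) := by
      intro l hlf
      rcases eq_or_ne l j with rfl | hlj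
      · exact hji₀
      · obtain ⟨i, hiB, hji, hli⟩ := hl l hlf hlj
        rwa [huniq i hiB hji] at hli
    have hDi₀4 : (Dset p (q i₀)).card ≤ 4 := by
      rcases (Finset.mem_filter.mp hi₀B).2 with h | h <;> omega
    have hfree4 : free.card ≤ 4 := le_trans (Finset.card_le_card hfreesub) hDi₀4
    have hB1 : B.card = 1 := by
      have h1 : 0 < B.card := Finset.card_pos.mpr ⟨i₀, hi₀B⟩
      omega
    have hBeq : ∀ i ∈ B, i = i₀ := by
      intro i hiB
      exact Finset.card_le_one.mp (by omega : B.card ≤ 1) _ hiB _ hi₀B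
    have hDi₀card : (Dset p (q i₀)).card = 4 := by
      have := Finset.card_le_card hfreesub
      omega
    have hA2 : ∀ i ∈ A, (Dset p (q i)).card = 2 := by
      intro i₁ hi₁
      by_contra hne1
      have h11 : (Dset p (q i₁)).card = 1 := by
        have := (Finset.mem_filter.mp hi₁).2
        have := hδ1 i₁
        omega
      have hFc : F.card + 1 ≤ 2 * A.card := by
        have hsum : ∑ i ∈ A, (Dset p (q i)).card + 1 ≤ 2 * A.card := by
          rw [← Finset.add_sum_erase A _ hi₁]
          have hrest : ∑ i ∈ A.erase i₁, (Dset p (q i)).card ≤ 2 * (A.card - 1) := by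
            calc _ ≤ ∑ _i ∈ A.erase i₁, 2 := Finset.sum_le_sum
                  (fun i hi => (Finset.mem_filter.mp (Finset.mem_of_mem_erase hi)).2)
              _ = 2 * (A.card - 1) := by
                  rw [Finset.sum_const, smul_eq_mul, Finset.card_erase_of_mem hi₁, mul_comm]
          have hA1 : 1 ≤ A.card := Finset.card_pos.mpr ⟨i₁, hi₁⟩
          omega
        have hbu : F.card ≤ ∑ i ∈ A, (Dset p (q i)).card := by
          rw [hF]; exact Finset.card_biUnion_le
        omega
      omega
    refine ⟨flip1 j p, ?_, Or.inl ⟨j, rfl⟩⟩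
    intro i
    rcases hclass i with ⟨h2, hiA⟩ | ⟨h34, hiB⟩ | h5
    · have e1 : hdist (flip1 j p) (q i) = hdist p (q i) + 1 := hdist_flip_not_mem (hjA i hiA)
      have := hA2 i hiA
      have hdq : hdist p (q i) = (Dset p (q i)).card := rfl
      omega
    · have hieq := hBeq i hiB
      subst hieq
      have e1 : hdist (flip1 j p) (q i) + 1 = hdist p (q i) := hdist_flip_mem hji₀
      have hdq : hdist p (q i) = (Dset p (q i)).card := rfl
      omega
    · have e1 := hdist_flip_ge p (q i) j
      have hdq : hdist p (q i) = (Dset p (q i)).card := rfl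
      omega


section Game

variable {W : Fin d → Type*} (T : ∀ i, SimpleGraph (W i)) (a b : ∀ i, W i)

def emb (p : Fin d → Bool) : ∀ i, W i := fun i => bif p i then b i else a i

open Classical in
noncomputable def proj (x : ∀ i, W i) : Fin d → Bool := fun i =>
  if x i = b i then true else false

lemma proj_emb (hab : ∀ i, (T i).Adj (a i) (b i)) (p : Fin d → Bool) : proj b (emb a b p) = p := by
  funext i
  cases hp : p i
  · have : emb a b p i = a i := by simp [emb, hp]
    simp [proj, this, (hab i).ne]
  · have : emb a b p i = b i := by simp [emb, hp]
    simp [proj, this]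

lemma hdist_proj_adj {x y : ∀ i, W i} (h : (boxPi T).Adj x y) :
    hdist (proj b x) (proj b y) ≤ 1 := by
  obtain ⟨i0, -, heq⟩ := h
  have hsub : Dset (proj b x) (proj b y) ⊆ {i0} := by
    intro j hj
    rw [mem_Dset] at hj
    rcases eq_or_ne j i0 with rfl | hne
    · exact Finset.mem_singleton_self _
    · exact absurd (by simp [proj, heq j hne]) hj
  calc (Dset (proj b x) (proj b y)).card ≤ ({i0} : Finset (Fin d)).card :=
        Finset.card_le_card hsub
    _ = 1 := Finset.card_singleton _

lemma hdist_proj_walk {x y : ∀ i, W i} (w : (boxPi T).Walk x y) :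
    hdist (proj b x) (proj b y) ≤ w.length := by
  induction w with
  | nil => simp [hdist_self]
  | @cons u v y h w ih =>
    calc hdist (proj b u) (proj b y) ≤ hdist (proj b u) (proj b v) + hdist (proj b v) (proj b y) :=
          hdist_triangle _ _ _
      _ ≤ 1 + w.length := Nat.add_le_add (hdist_proj_adj T b h) ih
      _ = (Walk.cons h w).length := by rw [Walk.length_cons]; omega

lemma adj_emb_flip (hab : ∀ i, (T i).Adj (a i) (b i)) (p : Fin d → Bool) (j : Fin d) :
    (boxPi T).Adj (emb a b p) (emb a b (flip1 j p)) := by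
  refine ⟨j, ?_, ?_⟩
  · have h1 : flip1 j p j = !(p j) := flip1_apply_self j p
    cases hp : p j
    · have : emb a b p j = a j := by simp [emb, hp]
      have h2 : emb a b (flip1 j p) j = b j := by simp [emb, h1, hp]
      rw [this, h2]; exact hab j
    · have : emb a b p j = b j := by simp [emb, hp]
      have h2 : emb a b (flip1 j p) j = a j := by simp [emb, h1, hp]
      rw [this, h2]; exact (hab j).symm
  · intro j' hj'
    simp [emb, flip1_apply_ne hj']

lemma escape (hab : ∀ i, (T i).Adj (a i) (b i)) {k : ℕ} (hdk : 2 * k + 2 ≤ d) :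
    ∀ (n : ℕ) (cops : Fin k → ∀ i, W i) (p : Fin d → Bool),
      (∀ i, 3 ≤ hdist p (proj b (cops i))) →
      ¬ CanCatch (boxPi T) 2 2 n cops (emb a b p) := by
  have hcapt : ∀ (cops : Fin k → ∀ i, W i) (p : Fin d → Bool),
      (∀ i, 3 ≤ hdist p (proj b (cops i))) → ¬ ∃ i, cops i = emb a b p := by
    rintro cops p hp ⟨i, hi⟩
    have h0 := hp i
    rw [hi, proj_emb T a b hab, hdist_self] at h0
    omega
  intro n
  induction n with
  | zero =>
    intro cops p hp hc
    exact hcapt cops p hp hc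
  | succ n ih =>
    rintro cops p hp hc
    rw [CanCatch] at hc
    rcases hc with hcap | ⟨cops', hstep, hrest⟩
    · exact hcapt cops p hp hcap
    · have hq1 : ∀ i, p ≠ proj b (cops' i) := by
        intro i heq
        obtain ⟨w, hw⟩ := hstep i
        have h2 : hdist (proj b (cops i)) (proj b (cops' i)) ≤ 2 :=
          le_trans (hdist_proj_walk T b w) hw
        have h3 := hdist_triangle p (proj b (cops' i)) (proj b (cops i))
        have h4 : hdist p (proj b (cops' i)) = 0 := by rw [heq, hdist_self]
        have h5 := hdist_comm (proj b (cops' i)) (proj b (cops i))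
        have h6 := hp i
        omega
      obtain ⟨p', hp3, hcase⟩ := move hdk p (fun i => proj b (cops' i)) hq1
      rcases hrest with ⟨i, hi⟩ | hforall
      · apply hq1 i
        rw [hi, proj_emb T a b hab]
      · have hend : ∀ i, cops' i ≠ emb a b p' := by
          intro i hi
          have h0 := hp3 i
          rw [hi, proj_emb T a b hab, hdist_self] at h0
          omega
        rcases hcase with ⟨j, rfl⟩ | ⟨j, l, hlj, rfl, hmidsafe⟩
        · -- single flip
          have hrs : robberStep (boxPi T) 2 {x | ∃ i, cops' i = x}
              (emb a b p) (emb a b (flip1 j p)) := by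
            refine ⟨Walk.cons (adj_emb_flip T a b hab p j) Walk.nil, by simp, ?_⟩
            intro x hx
            simp only [Walk.support_cons, Walk.support_nil, List.tail_cons,
              List.mem_cons, List.mem_singleton, List.not_mem_nil, or_false] at hx
            rintro ⟨i, hi⟩
            rw [hx] at hi
            exact hend i hi
          exact ih cops' (flip1 j p) hp3 (hforall _ hrs)
        · -- double flip
          have hmid' : ∀ i, cops' i ≠ emb a b (flip1 j p) := by
            intro i hi
            apply hmidsafe i
            rw [hi]
            exact (proj_emb T a b hab _).symm
          have hrs : robberStep (boxPi T) 2 {x | ∃ i, cops' i = x}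
              (emb a b p) (emb a b (flip1 l (flip1 j p))) := by
            refine ⟨Walk.cons (adj_emb_flip T a b hab p j)
              (Walk.cons (adj_emb_flip T a b hab (flip1 j p) l) Walk.nil), by simp, ?_⟩
            intro x hx
            simp only [Walk.support_cons, Walk.support_nil, List.tail_cons,
              List.mem_cons, List.not_mem_nil, or_false] at hx
            rintro ⟨i, hi⟩
            rcases hx with hx | hx
            · rw [hx] at hi; exact hmid' i hi
            · rw [hx] at hi; exact hend i hi
          exact ih cops' (flip1 l (flip1 j p)) hp3 (hforall _ hrs)

end Game

end S15
end S15Aux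

open Finset in
/-- For every positive integer `d` and finite trees `T 0, …, T (d-1)`, each with at least
two vertices, the Cartesian product satisfies `c_{2,2}(T_1 □ ⋯ □ T_d) ≥ ⌊d/2⌋`. -/
theorem statement15 (d : ℕ) (hd : 1 ≤ d)
    {W : Fin d → Type*} [∀ i, Fintype (W i)]
    (T : ∀ i, SimpleGraph (W i)) (htree : ∀ i, (T i).IsTree)
    (hnontriv : ∀ i, 2 ≤ Fintype.card (W i)) :
    d / 2 ≤ copNumber (boxPi T) 2 2 := by
  classical
  have hedge : ∀ i, ∃ a b : W i, (T i).Adj a b := by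
    intro i
    obtain ⟨x, y, hxy⟩ := Fintype.exists_pair_of_one_lt_card
      (by have := hnontriv i; omega : 1 < Fintype.card (W i))
    obtain ⟨w⟩ := (htree i).isConnected.preconnected x y
    cases w with
    | nil => exact absurd rfl hxy
    | cons h _ => exact ⟨_, _, h⟩
  choose a b hab using hedge
  refine le_csInf ⟨Fintype.card (∀ i, W i), ?_⟩ ?_
  · refine ⟨fun i => (Fintype.equivFin (∀ i, W i)).symm i, fun r => ⟨0, ?_⟩⟩
    exact ⟨Fintype.equivFin (∀ i, W i) r, by simp⟩
  · rintro k ⟨cops, hwin⟩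
    by_contra hlt
    push_neg at hlt
    have hdk : 2 * k + 2 ≤ d := by omega
    have hqex : ∃ p : Fin d → Bool, ∀ i, p ≠ S15.proj b (cops i) := by
      by_contra hcon
      push_neg at hcon
      have hsub : (univ : Finset (Fin d → Bool)) ⊆
          univ.image (fun i => S15.proj b (cops i)) := by
        intro p _
        obtain ⟨i, hi⟩ := hcon p
        exact Finset.mem_image.mpr ⟨i, Finset.mem_univ _, hi.symm⟩
      have h1 : (univ : Finset (Fin d → Bool)).card ≤ k := by
        calc _ ≤ (univ.image (fun i => S15.proj b (cops i))).card := Finset.card_le_card hsub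
          _ ≤ (univ : Finset (Fin k)).card := Finset.card_image_le
          _ = k := by simp
      have h2 : (univ : Finset (Fin d → Bool)).card = 2 ^ d := by
        rw [Finset.card_univ]
        simp [Fintype.card_fun]
      have h3 : d < 2 ^ d := Nat.lt_two_pow_self
      omega
    obtain ⟨p₁, hp₁⟩ := hqex
    obtain ⟨p₀, hp₀, -⟩ := S15.move hdk p₁ (fun i => S15.proj b (cops i)) hp₁
    obtain ⟨n, hc⟩ := hwin (S15.emb a b p₀)
    exact S15.escape T a b hab hdk n cops p₀ hp₀ hc
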